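/- The class of languages recognized by PRA-C is not closed under homomorphisms: let Σ = {a,b,c}, T = {a,b}, and let h* : Σ* → T* be the monoid homomorphism induced by h(a) = a, h(b) = b, h(c) = a. Then the language L = (a,b)*cc* ⊆ Σ* (all words containing at least one c in which every letter from the first occurrence of c onward equals c) is recognized by some PRA-C with some interval, but its image h*(L) = (a,b)*a ⊆ T* (all nonempty words over {a,b} ending in a) is not recognized by any PRA-C with any interval. -/

import Mathlib

/-- A real square matrix is doubly stochastic if all entries are nonnegative and
every row and every column sums to 1. -/
def DoublyStochastic {n : ℕ} (A : Matrix (Fin n) (Fin n) ℝ) : Prop :=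
  (∀ i j, 0 ≤ A i j) ∧ (∀ i, ∑ j, A i j = 1) ∧ (∀ j, ∑ i, A i j = 1)

/-- A 1-way probabilistic reversible C-automaton (PRA-C) over input alphabet `α`:
a finite state set `Fin n`, an initial state, a set of accepting states, and
a doubly stochastic matrix for each symbol of the working alphabet
(the letters of `α` together with the end-markers `#` and `$`). -/
structure PRAC (α : Type) where
  n : ℕ
  q0 : Fin n
  F : Finset (Fin n)
  V : α → Matrix (Fin n) (Fin n) ℝ
  Vhash : Matrix (Fin n) (Fin n) ℝ
  Vdollar : Matrix (Fin n) (Fin n) ℝ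
  ds : ∀ a, DoublyStochastic (V a)
  ds_hash : DoublyStochastic Vhash
  ds_dollar : DoublyStochastic Vdollar

namespace PRAC

variable {α : Type}

/-- Acceptance probability of a word `w = σ₁…σ_k`: the total mass on accepting states of
`V_$ ⬝ V_{σ_k} ⬝ ⋯ ⬝ V_{σ₁} ⬝ V_# ⬝ e_{q₀}`. -/
def accProb (A : PRAC α) (w : List α) : ℝ :=
  ∑ q ∈ A.F,
    (A.Vdollar.mulVec
      (w.foldl (fun v a => (A.V a).mulVec v) (A.Vhash.mulVec (Pi.single A.q0 1)))) q

/-- Recognition of a language with interval `(p₁, p₂)`. -/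
def Recognizes (A : PRAC α) (L : Set (List α)) (p1 p2 : ℝ) : Prop :=
  0 ≤ p1 ∧ p1 < p2 ∧ p2 ≤ 1 ∧
  (∀ w ∈ L, p2 ≤ A.accProb w) ∧ (∀ w ∉ L, A.accProb w ≤ p1)

/-- Recognition with probability `p`, i.e. with interval `(1 - p, p)`. -/
def RecognizesWithProb (A : PRAC α) (L : Set (List α)) (p : ℝ) : Prop :=
  A.Recognizes L (1 - p) p

end PRAC

/-- The three-letter alphabet `{a, b, c}`. -/
inductive Sig3 : Type
  | a : Sig3
  | b : Sig3
  | c : Sig3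

/-- The homomorphism `h : {a,b,c} → {a,b}` with `h(a) = a`, `h(b) = b`, `h(c) = a`
(where `true` plays the role of `a` and `false` of `b`). -/
def hmap : Sig3 → Bool
  | Sig3.a => true
  | Sig3.b => false
  | Sig3.c => true

section AuxPart1
open Matrix

@[simp] lemma vec3_zero (x y z : ℝ) : ![x,y,z] 0 = x := rfl
@[simp] lemma vec3_one (x y z : ℝ) : ![x,y,z] 1 = y := rfl
@[simp] lemma vec3_two (x y z : ℝ) : ![x,y,z] 2 = z := rfl

noncomputable def Mab : Matrix (Fin 3) (Fin 3) ℝ := fun i j =>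
  if i = 0 then (if j = 0 then 1 else 0) else if j = 0 then 0 else 1/2

noncomputable def Mc3 : Matrix (Fin 3) (Fin 3) ℝ := fun i j =>
  if i = 2 then (if j = 2 then 1 else 0) else if j = 2 then 0 else 1/2

lemma ds_Mab : DoublyStochastic Mab := by
  refine ⟨fun i j => ?_, fun i => ?_, fun j => ?_⟩
  · fin_cases i <;> fin_cases j <;> norm_num [Mab, Fin.ext_iff]
  · fin_cases i <;> rw [Fin.sum_univ_three] <;> norm_num [Mab, Fin.ext_iff]
  · fin_cases j <;> rw [Fin.sum_univ_three] <;> norm_num [Mab, Fin.ext_iff]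

lemma ds_Mc3 : DoublyStochastic Mc3 := by
  refine ⟨fun i j => ?_, fun i => ?_, fun j => ?_⟩
  · fin_cases i <;> fin_cases j <;> norm_num [Mc3, Fin.ext_iff]
  · fin_cases i <;> rw [Fin.sum_univ_three] <;> norm_num [Mc3, Fin.ext_iff]
  · fin_cases j <;> rw [Fin.sum_univ_three] <;> norm_num [Mc3, Fin.ext_iff]

lemma ds_one3 : DoublyStochastic (1 : Matrix (Fin 3) (Fin 3) ℝ) := by
  refine ⟨fun i j => ?_, fun i => ?_, fun j => ?_⟩
  · rw [Matrix.one_apply]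
    split <;> norm_num
  · fin_cases i <;> rw [Fin.sum_univ_three] <;> norm_num [Matrix.one_apply, Fin.ext_iff]
  · fin_cases j <;> rw [Fin.sum_univ_three] <;> norm_num [Matrix.one_apply, Fin.ext_iff]

noncomputable def A3 : PRAC Sig3 where
  n := 3
  q0 := 0
  F := {1}
  V := fun s => match s with
    | Sig3.c => Mc3
    | _ => Mab
  Vhash := 1
  Vdollar := 1
  ds := fun s => by cases s <;> [exact ds_Mab; exact ds_Mab; exact ds_Mc3]
  ds_hash := ds_one3
  ds_dollar := ds_one3

def L3 : Set (List Sig3) := {w : List Sig3 | ∃ (u : List Sig3) (k : ℕ), 1 ≤ k ∧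
  w = u ++ List.replicate k Sig3.c ∧ Sig3.c ∉ u}

lemma mab_vec (v : Fin 3 → ℝ) : Mab.mulVec v = ![v 0, (v 1 + v 2)/2, (v 1 + v 2)/2] := by
  funext i
  show ∑ j, Mab i j * v j = _
  fin_cases i <;> rw [Fin.sum_univ_three] <;> norm_num [Mab, Fin.ext_iff] <;> ring

lemma mc3_vec (v : Fin 3 → ℝ) : Mc3.mulVec v = ![(v 0 + v 1)/2, (v 0 + v 1)/2, v 2] := by
  funext i
  show ∑ j, Mc3 i j * v j = _
  fin_cases i <;> rw [Fin.sum_univ_three] <;> norm_num [Mc3, Fin.ext_iff] <;> ring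

noncomputable def T3 (w : List Sig3) : Fin 3 → ℝ :=
  w.foldl (fun v s => (A3.V s).mulVec v) ![1,0,0]

def Bad3 (v : Fin 3 → ℝ) : Prop :=
  v 0 + v 1 + v 2 = 1 ∧ (0 ≤ v 0 ∧ 0 ≤ v 1 ∧ 0 ≤ v 2) ∧
  v 0^2 + v 1^2 + v 2^2 ≤ 3/8 ∧ v 1 ≤ 5/12

lemma lastL3 {w : List Sig3} (h : w ∈ L3) : w.getLast? = some Sig3.c := by
  obtain ⟨u, k, hk, rfl, -⟩ := h
  obtain ⟨k', rfl⟩ : ∃ k', k = k' + 1 := ⟨k - 1, by omega⟩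
  rw [List.replicate_succ', ← List.append_assoc]
  exact List.getLast?_concat

lemma c_mem_of_L3 {w : List Sig3} (h : w ∈ L3) : Sig3.c ∈ w := by
  obtain ⟨u, k, hk, rfl, -⟩ := h
  exact List.mem_append_right _ (List.mem_replicate.mpr ⟨by omega, rfl⟩)

lemma notL3_of_last {w : List Sig3} {s : Sig3} (hs : s ≠ Sig3.c) : w ++ [s] ∉ L3 := by
  intro h
  have h2 := lastL3 h
  rw [List.getLast?_concat] at h2
  exact hs (by injection h2)

lemma L3_concat_c_of_not {w : List Sig3} (h : Sig3.c ∉ w) : w ++ [Sig3.c] ∈ L3 :=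
  ⟨w, 1, le_refl 1, by simp, h⟩

lemma L3_concat_c {w : List Sig3} (h : w ∈ L3) : w ++ [Sig3.c] ∈ L3 := by
  obtain ⟨u, k, hk, rfl, hc⟩ := h
  exact ⟨u, k + 1, by omega, by rw [List.replicate_succ', ← List.append_assoc], hc⟩

lemma not_c_concat {w : List Sig3} {s : Sig3} (hnc : Sig3.c ∉ w) (hs : s ≠ Sig3.c) :
    Sig3.c ∉ w ++ [s] := by
  intro h
  rcases List.mem_append.mp h with h | h
  · exact hnc h
  · exact hs (List.mem_singleton.mp h).symm

lemma bad_concat {w : List Sig3} (hc : Sig3.c ∈ w) (hn : w ∉ L3) (s : Sig3) :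
    w ++ [s] ∉ L3 := by
  cases s with
  | a => exact notL3_of_last (fun h => Sig3.noConfusion h)
  | b => exact notL3_of_last (fun h => Sig3.noConfusion h)
  | c =>
      intro h
      obtain ⟨u, k, hk, he, hcu⟩ := h
      obtain ⟨k', rfl⟩ : ∃ k', k = k' + 1 := ⟨k - 1, by omega⟩
      rw [List.replicate_succ', ← List.append_assoc] at he
      have hwu : w = u ++ List.replicate k' Sig3.c := List.append_cancel_right he
      rcases Nat.eq_zero_or_pos k' with h0 | h0
      · subst h0
        simp only [List.replicate_zero, List.append_nil] at hwu
        subst hwu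
        exact hcu hc
      · exact hn ⟨u, k', h0, hwu, hcu⟩

lemma bad_step_ab {v : Fin 3 → ℝ} (h : Bad3 v) : Bad3 (Mab.mulVec v) := by
  obtain ⟨hs, ⟨h0, h1, h2⟩, hq, hb⟩ := h
  rw [mab_vec]
  refine ⟨?_, ⟨?_, ?_, ?_⟩, ?_, ?_⟩ <;>
    simp only [vec3_zero, vec3_one, vec3_two]
  · linarith
  · linarith
  · linarith
  · linarith
  · nlinarith [sq_nonneg (v 1 - v 2)]
  · nlinarith [sq_nonneg (v 1 - v 2), sq_nonneg (v 1 + v 2 - 5/6)]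

lemma bad_step_c {v : Fin 3 → ℝ} (h : Bad3 v) : Bad3 (Mc3.mulVec v) := by
  obtain ⟨hs, ⟨h0, h1, h2⟩, hq, hb⟩ := h
  rw [mc3_vec]
  refine ⟨?_, ⟨?_, ?_, ?_⟩, ?_, ?_⟩ <;>
    simp only [vec3_zero, vec3_one, vec3_two]
  · linarith
  · linarith
  · linarith
  · linarith
  · nlinarith [sq_nonneg (v 0 - v 1)]
  · nlinarith [sq_nonneg (v 0 - v 1), sq_nonneg (v 0 + v 1 - 5/6)]

lemma good_to_bad : Bad3 (Mab.mulVec ![1/2,1/2,0]) := by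
  rw [mab_vec]
  refine ⟨?_, ⟨?_, ?_, ?_⟩, ?_, ?_⟩ <;>
    simp only [vec3_zero, vec3_one, vec3_two] <;> norm_num

lemma trich : ∀ w : List Sig3,
    (Sig3.c ∉ w ∧ T3 w = ![1,0,0]) ∨
    (w ∈ L3 ∧ T3 w = ![1/2,1/2,0]) ∨
    ((Sig3.c ∈ w ∧ w ∉ L3) ∧ Bad3 (T3 w)) := by
  have hconcat : ∀ (w : List Sig3) (s : Sig3), T3 (w ++ [s]) = (A3.V s).mulVec (T3 w) := by
    intro w s
    exact List.foldl_append
  have hVa : A3.V Sig3.a = Mab := rfl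
  have hVb : A3.V Sig3.b = Mab := rfl
  have hVc : A3.V Sig3.c = Mc3 := rfl
  have habe : Mab.mulVec ![1,0,0] = ![1,0,0] := by
    rw [mab_vec]
    norm_num
  have hce : Mc3.mulVec ![1,0,0] = ![1/2,1/2,0] := by
    rw [mc3_vec]
    norm_num
  have hcg : Mc3.mulVec ![1/2,1/2,0] = ![1/2,1/2,0] := by
    rw [mc3_vec]
    norm_num
  intro w
  induction w using List.reverseRecOn with
  | nil => exact Or.inl ⟨by simp, rfl⟩
  | append_singleton w s ih =>
      rcases ih with ⟨hnc, hT⟩ | ⟨hL, hT⟩ | ⟨⟨hc, hnL⟩, hB⟩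
      · cases s with
        | a => exact Or.inl ⟨not_c_concat hnc (fun h => Sig3.noConfusion h),
            by rw [hconcat, hT, hVa]; exact habe⟩
        | b => exact Or.inl ⟨not_c_concat hnc (fun h => Sig3.noConfusion h),
            by rw [hconcat, hT, hVb]; exact habe⟩
        | c => exact Or.inr (Or.inl ⟨L3_concat_c_of_not hnc,
            by rw [hconcat, hT, hVc]; exact hce⟩)
      · cases s with
        | a => exact Or.inr (Or.inr ⟨⟨List.mem_append_left _ (c_mem_of_L3 hL),
            notL3_of_last (fun h => Sig3.noConfusion h)⟩,
            by rw [hconcat, hT, hVa]; exact good_to_bad⟩)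
        | b => exact Or.inr (Or.inr ⟨⟨List.mem_append_left _ (c_mem_of_L3 hL),
            notL3_of_last (fun h => Sig3.noConfusion h)⟩,
            by rw [hconcat, hT, hVb]; exact good_to_bad⟩)
        | c => exact Or.inr (Or.inl ⟨L3_concat_c hL, by rw [hconcat, hT, hVc]; exact hcg⟩)
      · refine Or.inr (Or.inr ⟨⟨List.mem_append_left _ hc, bad_concat hc hnL s⟩, ?_⟩)
        rw [hconcat]
        cases s with
        | a => rw [hVa]; exact bad_step_ab hB
        | b => rw [hVb]; exact bad_step_ab hB
        | c => rw [hVc]; exact bad_step_c hB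

lemma acc3 (w : List Sig3) : A3.accProb w = T3 w 1 := by
  have hbase : (A3.Vhash.mulVec (Pi.single A3.q0 1)) = ![1,0,0] := by
    show (1 : Matrix (Fin 3) (Fin 3) ℝ).mulVec (Pi.single 0 1) = _
    rw [Matrix.one_mulVec]
    funext i
    fin_cases i <;> norm_num [Pi.single_apply, Fin.ext_iff]
  show ∑ q ∈ ({1} : Finset (Fin 3)),
      ((1 : Matrix (Fin 3) (Fin 3) ℝ).mulVec
        (w.foldl (fun v s => (A3.V s).mulVec v) (A3.Vhash.mulVec (Pi.single A3.q0 1)))) q = _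
  rw [hbase, Matrix.one_mulVec, Finset.sum_singleton]
  rfl

theorem part1 : A3.Recognizes L3 (5/12) (1/2) := by
  refine ⟨by norm_num, by norm_num, by norm_num, ?_, ?_⟩
  · intro w hw
    rcases trich w with ⟨hnc, hT⟩ | ⟨hL, hT⟩ | ⟨⟨hc, hnL⟩, hB⟩
    · exact absurd (c_mem_of_L3 hw) hnc
    · rw [acc3, hT]
      norm_num
    · exact absurd hw hnL
  · intro w hw
    rcases trich w with ⟨hnc, hT⟩ | ⟨hL, hT⟩ | ⟨⟨hc, hnL⟩, hB⟩
    · rw [acc3, hT]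
      norm_num
    · exact absurd hL hw
    · rw [acc3]
      exact hB.2.2.2

theorem part2 : (fun w : List Sig3 => w.map hmap) '' L3 =
    {w : List Bool | w.getLast? = some true} := by
  ext w
  simp only [Set.mem_image, Set.mem_setOf_eq]
  constructor
  · rintro ⟨v, ⟨u, k, hk, rfl, hcu⟩, rfl⟩
    obtain ⟨k', rfl⟩ : ∃ k', k = k' + 1 := ⟨k - 1, by omega⟩
    rw [List.map_append, List.map_replicate]
    show (_ ++ List.replicate (k' + 1) true).getLast? = some true
    rw [List.replicate_succ', ← List.append_assoc]
    exact List.getLast?_concat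
  · intro hw
    rcases List.eq_nil_or_concat w with rfl | ⟨y, x, rfl⟩
    · simp at hw
    · simp only [List.concat_eq_append] at hw ⊢
      rw [List.getLast?_concat] at hw
      obtain rfl : x = true := by injection hw
      refine ⟨(y.map fun b => if b then Sig3.a else Sig3.b) ++ [Sig3.c],
        ⟨y.map fun b => if b then Sig3.a else Sig3.b, 1, le_refl 1, by simp, ?_⟩, ?_⟩
      · intro h
        rcases List.mem_map.mp h with ⟨b, -, hb⟩
        cases b <;> simp at hb
      · show (_ ++ [Sig3.c]).map hmap = y ++ [true]
        rw [List.map_append, List.map_map]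
        have he : hmap ∘ (fun b => if b then Sig3.a else Sig3.b) = id := by
          funext b
          cases b <;> rfl
        rw [he, List.map_id]
        rfl

end AuxPart1

section AuxPart3
open Matrix

def nsq {n : ℕ} (v : Fin n → ℝ) : ℝ := ∑ i, (v i)^2
def ip {n : ℕ} (u v : Fin n → ℝ) : ℝ := ∑ i, u i * v i

lemma nsq_nonneg' {n : ℕ} (v : Fin n → ℝ) : 0 ≤ nsq v :=
  Finset.sum_nonneg fun _ _ => sq_nonneg _

lemma nsq_sub_expand {n : ℕ} (u v : Fin n → ℝ) :
    nsq (u - v) = nsq u - 2 * ip u v + nsq v := by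
  simp only [nsq, ip, Pi.sub_apply, sub_sq, Finset.mul_sum, Finset.sum_add_distrib,
    Finset.sum_sub_distrib]
  ring_nf

lemma ip_cauchy {n : ℕ} (u v : Fin n → ℝ) : (ip u v)^2 ≤ nsq u * nsq v :=
  Finset.sum_mul_sq_le_sq_mul_sq _ _ _

lemma ds_transpose {n : ℕ} {M : Matrix (Fin n) (Fin n) ℝ} (h : DoublyStochastic M) :
    DoublyStochastic Mᵀ :=
  ⟨fun i j => h.1 j i, fun i => h.2.2 i, fun j => h.2.1 j⟩

lemma ip_adjoint {n : ℕ} (M : Matrix (Fin n) (Fin n) ℝ) (u v : Fin n → ℝ) :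
    ip (M.mulVec u) v = ip u (Mᵀ.mulVec v) := by
  simp only [ip, Matrix.mulVec, dotProduct, Matrix.transpose_apply, Finset.sum_mul,
    Finset.mul_sum]
  rw [Finset.sum_comm]
  exact Finset.sum_congr rfl fun i _ => Finset.sum_congr rfl fun j _ => by ring

lemma nsq_mulVec_le {n : ℕ} {M : Matrix (Fin n) (Fin n) ℝ} (h : DoublyStochastic M)
    (v : Fin n → ℝ) : nsq (M.mulVec v) ≤ nsq v := by
  have key : ∀ i, (M.mulVec v i)^2 ≤ ∑ j, M i j * (v j)^2 := by
    intro i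
    have h2 := Finset.sum_sq_le_sum_mul_sum_of_sq_eq_mul Finset.univ
      (f := fun j => M i j) (g := fun j => M i j * (v j)^2) (r := fun j => M i j * v j)
      (fun j _ => h.1 i j) (fun j _ => mul_nonneg (h.1 i j) (sq_nonneg _))
      (fun j _ => by ring)
    calc (M.mulVec v i)^2 = (∑ j, M i j * v j)^2 := by
          simp [Matrix.mulVec, dotProduct]
      _ ≤ (∑ j, M i j) * ∑ j, M i j * (v j)^2 := h2
      _ = ∑ j, M i j * (v j)^2 := by rw [h.2.1 i, one_mul]
  calc nsq (M.mulVec v) ≤ ∑ i, ∑ j, M i j * (v j)^2 :=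
        Finset.sum_le_sum fun i _ => key i
    _ = ∑ j, (∑ i, M i j) * (v j)^2 := by
        rw [Finset.sum_comm]
        simp [Finset.sum_mul]
    _ = nsq v := by
        simp only [nsq]
        exact Finset.sum_congr rfl fun j _ => by rw [h.2.2 j, one_mul]

lemma mulVec_isometry_fix {n : ℕ} {M : Matrix (Fin n) (Fin n) ℝ}
    (h : DoublyStochastic M) {v : Fin n → ℝ} (hv : nsq (M.mulVec v) = nsq v) :
    Mᵀ.mulVec (M.mulVec v) = v := by
  set u := Mᵀ.mulVec (M.mulVec v) with hu
  have h1 : nsq u ≤ nsq v := le_of_le_of_eq (nsq_mulVec_le (ds_transpose h) _) hv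
  have h2 : ip u v = nsq v := by
    have e : ip (M.mulVec v) (M.mulVec v) = ip u v := by
      rw [ip_adjoint]
      simp only [ip]
      exact Finset.sum_congr rfl fun i _ => by ring
    have e2 : ip (M.mulVec v) (M.mulVec v) = nsq v := by
      rw [← hv]; simp [ip, nsq, sq]
    rw [← e, e2]
  have h3 : nsq (u - v) ≤ 0 := by
    rw [nsq_sub_expand, h2]; linarith
  have h4 : nsq (u - v) = 0 := le_antisymm h3 (nsq_nonneg' _)
  funext i
  have h5 : ∀ j ∈ Finset.univ, (0:ℝ) ≤ ((u - v) j)^2 := fun _ _ => sq_nonneg _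
  have h6 := (Finset.sum_eq_zero_iff_of_nonneg h5).mp h4 i (Finset.mem_univ i)
  have := pow_eq_zero_iff (n := 2) (by norm_num) |>.mp h6
  exact sub_eq_zero.mp this

lemma ip_comm {n : ℕ} (u v : Fin n → ℝ) : ip u v = ip v u := by
  simp only [ip]
  exact Finset.sum_congr rfl fun i _ => mul_comm _ _

lemma ip_mulVec_eq {n : ℕ} {M : Matrix (Fin n) (Fin n) ℝ}
    (h : DoublyStochastic M) {v : Fin n → ℝ} (hv : nsq (M.mulVec v) = nsq v)
    (w : Fin n → ℝ) : ip (M.mulVec v) (M.mulVec w) = ip v w := by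
  rw [ip_comm, ip_adjoint, mulVec_isometry_fix h hv, ip_comm]

lemma nsq_sub_mulVec_eq {n : ℕ} {M : Matrix (Fin n) (Fin n) ℝ}
    (h : DoublyStochastic M) {v w : Fin n → ℝ} (hv : nsq (M.mulVec v) = nsq v)
    (hw : nsq (M.mulVec w) = nsq w) :
    nsq (M.mulVec v - M.mulVec w) = nsq (v - w) := by
  rw [nsq_sub_expand, nsq_sub_expand, hv, hw, ip_mulVec_eq h hv w]

lemma nsq_mulVec_sub_le {n : ℕ} {M : Matrix (Fin n) (Fin n) ℝ} (h : DoublyStochastic M)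
    (u v : Fin n → ℝ) : nsq (M.mulVec u - M.mulVec v) ≤ nsq (u - v) := by
  rw [← Matrix.mulVec_sub]
  exact nsq_mulVec_le h _

lemma nsq_sub_comm {n : ℕ} (u v : Fin n → ℝ) : nsq (u - v) = nsq (v - u) := by
  simp only [nsq, Pi.sub_apply]
  exact Finset.sum_congr rfl fun i _ => by ring

lemma nsq_sub_le_two {n : ℕ} (u v w : Fin n → ℝ) :
    nsq (u - w) ≤ 2 * (nsq (u - v) + nsq (v - w)) := by
  simp only [nsq, Pi.sub_apply, Finset.mul_sum, Finset.sum_add_distrib, ← Finset.sum_add_distrib]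
  refine Finset.sum_le_sum fun i _ => ?_
  nlinarith [sq_nonneg (u i - 2 * v i + w i)]

lemma nsq_add_three {n : ℕ} (x y z : Fin n → ℝ) :
    nsq (x + y + z) ≤ 3 * (nsq x + nsq y + nsq z) := by
  simp only [nsq, Pi.add_apply, Finset.mul_sum, Finset.sum_add_distrib, ← Finset.sum_add_distrib]
  refine Finset.sum_le_sum fun i _ => ?_
  nlinarith [sq_nonneg (x i - y i), sq_nonneg (y i - z i), sq_nonneg (x i - z i)]

lemma nsq_sub_le_dist {n : ℕ} (u v : Fin n → ℝ) : nsq (u - v) ≤ n * (dist u v)^2 := by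
  have h : ∀ i ∈ Finset.univ, ((u - v) i)^2 ≤ (dist u v)^2 := by
    intro i _
    have h1 := dist_le_pi_dist u v i
    rw [Real.dist_eq] at h1
    calc ((u - v) i)^2 = |u i - v i|^2 := by rw [sq_abs]; rfl
      _ ≤ (dist u v)^2 := pow_le_pow_left₀ (abs_nonneg _) h1 2
  calc nsq (u - v) ≤ ∑ _i : Fin n, (dist u v)^2 := Finset.sum_le_sum h
    _ = n * (dist u v)^2 := by simp [Finset.sum_const, Finset.card_univ, nsmul_eq_mul]

lemma prob_mulVec {n : ℕ} {M : Matrix (Fin n) (Fin n) ℝ} (h : DoublyStochastic M)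
    {v : Fin n → ℝ} (hv : (∀ i, 0 ≤ v i) ∧ ∑ i, v i = 1) :
    (∀ i, 0 ≤ M.mulVec v i) ∧ ∑ i, M.mulVec v i = 1 := by
  constructor
  · intro i
    show (0:ℝ) ≤ ∑ j, M i j * v j
    exact Finset.sum_nonneg fun j _ => mul_nonneg (h.1 i j) (hv.1 j)
  · calc ∑ i, M.mulVec v i = ∑ j, (∑ i, M i j) * v j := by
          show ∑ i, ∑ j, M i j * v j = _
          simp only [Finset.sum_mul]
          exact Finset.sum_comm
      _ = ∑ j, v j := Finset.sum_congr rfl fun j _ => by rw [h.2.2 j, one_mul]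
      _ = 1 := hv.2

lemma continuous_mulVec {n : ℕ} (M : Matrix (Fin n) (Fin n) ℝ) :
    Continuous fun v : Fin n → ℝ => M.mulVec v := by
  refine continuous_pi fun i => ?_
  simp only [Matrix.mulVec, dotProduct]
  exact continuous_finset_sum _ fun j _ => (continuous_const.mul (continuous_apply j))

lemma continuous_nsq {n : ℕ} : Continuous (nsq (n := n)) := by
  unfold nsq
  exact continuous_finset_sum _ fun i _ => (continuous_apply i).pow 2

set_option maxHeartbeats 2000000 in
open Filter in
theorem part3 : ¬ ∃ (A : PRAC Bool) (p1 p2 : ℝ),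
    A.Recognizes {w : List Bool | w.getLast? = some true} p1 p2 := by
  rintro ⟨A, p1, p2, hp1, hp12, hp21, hL, hNL⟩
  set n := A.n with hn
  -- state evolution
  set T : List Bool → (Fin n → ℝ) :=
    fun w => w.foldl (fun v a => (A.V a).mulVec v) (A.Vhash.mulVec (Pi.single A.q0 1)) with hT
  have hTconcat : ∀ (w : List Bool) (a : Bool), T (w ++ [a]) = (A.V a).mulVec (T w) := by
    intro w a
    simp [hT, List.foldl_append]
  -- acceptance is linear in the final state
  set d : Fin n → ℝ := fun i => ∑ q ∈ A.F, A.Vdollar q i with hd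
  have hacc : ∀ w, A.accProb w = ip d (T w) := by
    intro w
    show ∑ q ∈ A.F, ∑ i, A.Vdollar q i * T w i = ∑ i, (∑ q ∈ A.F, A.Vdollar q i) * T w i
    rw [Finset.sum_comm]
    exact Finset.sum_congr rfl fun i _ => (Finset.sum_mul _ _ _).symm
  -- all reachable vectors are probability vectors
  have hprob : ∀ w, (∀ i, 0 ≤ T w i) ∧ ∑ i, T w i = 1 := by
    intro w
    induction w using List.reverseRecOn with
    | nil =>
        refine prob_mulVec A.ds_hash ⟨fun i => ?_, ?_⟩
        · by_cases h : i = A.q0 <;> simp [Pi.single_apply, h]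
        · simp [Pi.single_apply]
    | append_singleton w a ih =>
        rw [hTconcat]
        exact prob_mulVec (A.ds a) ih
  set R : Set (Fin n → ℝ) := Set.range T with hR
  have hRK : R ⊆ Set.Icc 0 1 := by
    rintro _ ⟨w, rfl⟩
    refine ⟨fun i => (hprob w).1 i, fun i => ?_⟩
    calc T w i ≤ ∑ j, T w j :=
          Finset.single_le_sum (fun j _ => (hprob w).1 j) (Finset.mem_univ i)
      _ = 1 := (hprob w).2
  set V : Set (Fin n → ℝ) := closure R with hV
  have hVcomp : IsCompact V :=
    IsCompact.of_isClosed_subset isCompact_Icc isClosed_closure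
      (closure_minimal hRK isClosed_Icc)
  have hVne : V.Nonempty := ⟨T [], subset_closure ⟨[], rfl⟩⟩
  have hVinv : ∀ (a : Bool), ∀ v ∈ V, (A.V a).mulVec v ∈ V := by
    intro a v hv
    have h1 : (A.V a).mulVec '' R ⊆ R := by
      rintro _ ⟨_, ⟨w, rfl⟩, rfl⟩
      exact ⟨w ++ [a], hTconcat w a⟩
    have h2 : (A.V a).mulVec v ∈ (fun u => (A.V a).mulVec u) '' (closure R) := ⟨v, hv, rfl⟩
    exact closure_mono h1 (image_closure_subset_closure_image (continuous_mulVec _) h2)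
  -- minimum of the norm on V
  obtain ⟨vm, hvmV, hmin'⟩ := hVcomp.exists_isMinOn hVne continuous_nsq.continuousOn
  have hmin : ∀ v ∈ V, nsq vm ≤ nsq v := fun v hv => hmin' hv
  set P : (Fin n → ℝ) → Prop := fun v => v ∈ V ∧ nsq v = nsq vm with hP
  have hPstep : ∀ (a : Bool) (v), P v → P ((A.V a).mulVec v) := by
    intro a v hv
    have h1 : (A.V a).mulVec v ∈ V := hVinv a v hv.1
    refine ⟨h1, le_antisymm ?_ (hmin _ h1)⟩
    rw [← hv.2]
    exact nsq_mulVec_le (A.ds a) v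
  have hPdist : ∀ (a : Bool) (u v), P u → P v →
      nsq ((A.V a).mulVec u - (A.V a).mulVec v) = nsq (u - v) := by
    intro a u v hu hv
    exact nsq_sub_mulVec_eq (A.ds a)
      (by rw [(hPstep a u hu).2, hu.2]) (by rw [(hPstep a v hv).2, hv.2])
  -- the "ba" block map
  set g : (Fin n → ℝ) → (Fin n → ℝ) := fun v => (A.V true).mulVec ((A.V false).mulVec v) with hg
  have hgP : ∀ v, P v → P (g v) := fun v hv => hPstep true _ (hPstep false v hv)
  have hgdist : ∀ u v, P u → P v → nsq (g u - g v) = nsq (u - v) := by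
    intro u v hu hv
    rw [hPdist true _ _ (hPstep false u hu) (hPstep false v hv), hPdist false _ _ hu hv]
  have hgcontract : ∀ u v, nsq (g u - g v) ≤ nsq (u - v) := by
    intro u v
    calc nsq (g u - g v) ≤ nsq ((A.V false).mulVec u - (A.V false).mulVec v) :=
          nsq_mulVec_sub_le (A.ds true) _ _
      _ ≤ nsq (u - v) := nsq_mulVec_sub_le (A.ds false) _ _
  have hiterP : ∀ (m : ℕ) (v), P v → P (g^[m] v) := by
    intro m
    induction m with
    | zero => intro v hv; simpa using hv
    | succ m ih =>
        intro v hv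
        rw [Function.iterate_succ_apply']
        exact hgP _ (ih v hv)
  have hiterdist : ∀ (m : ℕ) (u v), P u → P v →
      nsq (g^[m] u - g^[m] v) = nsq (u - v) := by
    intro m
    induction m with
    | zero => intro u v _ _; simp
    | succ m ih =>
        intro u v hu hv
        rw [Function.iterate_succ_apply', Function.iterate_succ_apply',
          hgdist _ _ (hiterP m u hu) (hiterP m v hv), ih u v hu hv]
  have hitercontract : ∀ (m : ℕ) (u v), nsq (g^[m] u - g^[m] v) ≤ nsq (u - v) := by
    intro m
    induction m with
    | zero => intro u v; simp
    | succ m ih =>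
        intro u v
        rw [Function.iterate_succ_apply', Function.iterate_succ_apply']
        exact le_trans (hgcontract _ _) (ih u v)
  -- the recurrent orbit
  set q : ℕ → (Fin n → ℝ) := fun k => g^[k] ((A.V false).mulVec vm) with hq
  have hqP : ∀ k, P (q k) := fun k => hiterP k _ (hPstep false vm ⟨hvmV, rfl⟩)
  -- the error budget
  set δ : ℝ := (p2 - p1)^2 / (10 * (nsq d + 1)) with hδ
  have hppos : 0 < p2 - p1 := sub_pos.mpr hp12
  have hdpos : 0 < 10 * (nsq d + 1) := by nlinarith [nsq_nonneg' d]
  have hδpos : 0 < δ := div_pos (pow_pos hppos 2) hdpos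
  -- find a near-recurrence
  obtain ⟨x, -, φ, hφmono, hconv⟩ := hVcomp.tendsto_subseq (x := q) (fun k => (hqP k).1)
  have hten : Tendsto (fun k => nsq (q (φ k) - x)) atTop (nhds 0) := by
    have c1 : Continuous fun y : Fin n → ℝ => nsq (y - x) :=
      continuous_nsq.comp (continuous_id.sub continuous_const)
    have h2 := (c1.tendsto x).comp hconv
    simp only [Function.comp_def] at h2 ⊢
    convert h2 using 2
    simp [nsq]
  obtain ⟨N, hN⟩ := eventually_atTop.mp (hten.eventually_lt_const (by positivity : (0:ℝ) < δ/4))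
  set i := φ N with hi
  set j := φ (N + 1) with hj
  have hij : i < j := hφmono (Nat.lt_succ_self N)
  set m := j - i with hm
  have hm1 : 1 ≤ m := by omega
  have him : i + m = j := by omega
  have hqij : nsq (q i - q j) < δ := by
    have h1 : nsq (q i - x) < δ/4 := hN N le_rfl
    have h2 : nsq (q j - x) < δ/4 := hN (N+1) (Nat.le_succ N)
    have h3 := nsq_sub_le_two (q i) x (q j)
    have h4 : nsq (x - q j) = nsq (q j - x) := nsq_sub_comm _ _
    linarith
  have hq0m : nsq (q 0 - q m) < δ := by
    have e1 : q i = g^[i] (q 0) := by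
      show g^[i] _ = g^[i] (g^[0] _)
      rw [Function.iterate_zero_apply]
    have e2 : q j = g^[i] (q m) := by
      show g^[j] _ = g^[i] (g^[m] _)
      rw [← Function.iterate_add_apply, him]
    rw [← hiterdist i (q 0) (q m) (hqP 0) (hqP m), ← e1, ← e2]
    exact hqij
  -- approximate vm by a reachable vector
  obtain ⟨y, hyR, hydist⟩ := Metric.mem_closure_iff.mp hvmV (Real.sqrt (δ/(n+1)))
    (Real.sqrt_pos.mpr (by positivity))
  obtain ⟨w0, rfl⟩ := hyR
  have happrox : nsq (T w0 - vm) < δ := by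
    have h1 : nsq (T w0 - vm) ≤ n * (dist (T w0) vm)^2 := nsq_sub_le_dist _ _
    have h2 : dist (T w0) vm < Real.sqrt (δ/(n+1)) := by rwa [dist_comm] at hydist
    have h3 : (dist (T w0) vm)^2 < δ/(n+1) := by
      have := Real.sq_sqrt (le_of_lt (show (0:ℝ) < δ/(n+1) by positivity))
      nlinarith [dist_nonneg (x := T w0) (y := vm)]
    have h4 : (n:ℝ) * (dist (T w0) vm)^2 < n * (δ/(n+1)) ∨ (n:ℝ) = 0 := by
      rcases Nat.eq_zero_or_pos n with h | h
      · right; simp [h]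
      · left
        have : (0:ℝ) < n := by exact_mod_cast h
        exact (mul_lt_mul_iff_right₀ this).mpr h3
    rcases h4 with h4 | h4
    · have h5 : (n:ℝ) * (δ/(n+1)) ≤ δ := by
        rw [mul_div_assoc', div_le_iff₀ (by positivity : (0:ℝ) < (n:ℝ)+1)]
        nlinarith
      linarith
    · have : nsq (T w0 - vm) ≤ 0 := by rw [h4] at h1; linarith
      linarith [nsq_nonneg' (T w0 - vm)]
  -- build the two words
  set Wb : List Bool := w0 ++ [false] with hWb
  have errb : nsq (T Wb - q 0) < δ := by
    have e0 : q 0 = (A.V false).mulVec vm := rfl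
    rw [hTconcat, e0]
    exact lt_of_le_of_lt (nsq_mulVec_sub_le (A.ds false) _ _) happrox
  set W : ℕ → List Bool := fun k => Wb ++ (List.replicate k [false, true]).flatten with hW
  have hWsucc : ∀ k, W (k+1) = (W k ++ [false]) ++ [true] := by
    intro k
    simp only [hW, List.replicate_succ', List.flatten_append]
    simp
  have hTW : ∀ k, T (W k) = g^[k] (T Wb) := by
    intro k
    induction k with
    | zero => simp [hW]
    | succ k ih =>
        rw [hWsucc, hTconcat, hTconcat, ih, Function.iterate_succ_apply']
  have errg : ∀ k, nsq (T (W k) - q k) < δ := by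
    intro k
    have e1 : q k = g^[k] (q 0) := by
      show g^[k] _ = g^[k] (g^[0] _)
      rw [Function.iterate_zero_apply]
    rw [hTW, e1]
    exact lt_of_le_of_lt (hitercontract k _ _) errb
  -- acceptance probabilities
  have hlastb : Wb.getLast? = some false := List.getLast?_concat
  have hlastg : (W m).getLast? = some true := by
    obtain ⟨m', hm'⟩ : ∃ m', m = m' + 1 := ⟨m - 1, by omega⟩
    rw [hm', hWsucc m']
    exact List.getLast?_concat
  have hbad : A.accProb Wb ≤ p1 := by
    refine hNL _ ?_
    simp only [Set.mem_setOf_eq, hlastb]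
    simp
  have hgood : p2 ≤ A.accProb (W m) := hL _ hlastg
  -- the contradiction
  have hdiff : A.accProb (W m) - A.accProb Wb = ip d (T (W m) - T Wb) := by
    rw [hacc, hacc]
    simp only [ip, Pi.sub_apply, mul_sub, Finset.sum_sub_distrib]
  have hgap : p2 - p1 ≤ A.accProb (W m) - A.accProb Wb := by linarith
  have hsq : (p2 - p1)^2 ≤ (ip d (T (W m) - T Wb))^2 := by
    rw [← hdiff]
    exact pow_le_pow_left₀ (le_of_lt hppos) hgap 2
  have hdecomp : T (W m) - T Wb = (T (W m) - q m) + (q m - q 0) + (q 0 - T Wb) := by abel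
  have h3 : nsq (T (W m) - T Wb) < 9 * δ := by
    have h1 := nsq_add_three (T (W m) - q m) (q m - q 0) (q 0 - T Wb)
    rw [← hdecomp] at h1
    have e1 : nsq (q m - q 0) = nsq (q 0 - q m) := nsq_sub_comm _ _
    have e2 : nsq (q 0 - T Wb) = nsq (T Wb - q 0) := nsq_sub_comm _ _
    have := errg m
    linarith
  have hfinal : (p2 - p1)^2 < 9 * (nsq d + 1) * δ := by
    have h4 := ip_cauchy d (T (W m) - T Wb)
    have h5 : nsq d * nsq (T (W m) - T Wb) ≤ nsq d * (9 * δ) := by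
      rcases eq_or_lt_of_le (nsq_nonneg' d) with h | h
      · rw [← h]; simp
      · exact le_of_lt ((mul_lt_mul_iff_right₀ h).mpr h3)
    nlinarith [nsq_nonneg' d, nsq_nonneg' (T (W m) - T Wb)]
  rw [hδ] at hfinal
  have hD : (0:ℝ) < nsq d + 1 := by nlinarith [nsq_nonneg' d]
  have he : 9 * (nsq d + 1) * ((p2 - p1)^2 / (10 * (nsq d + 1))) = (9/10) * (p2-p1)^2 := by
    field_simp
  rw [he] at hfinal
  nlinarith [pow_pos hppos 2]

end AuxPart3

/-- The class of languages recognized by PRA-C is not closed under homomorphisms: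
the language `(a,b)*cc*` is recognized by some PRA-C, its image under `h*` is the
language `(a,b)*a`, and that image is not recognized by any PRA-C. -/
theorem prac_not_closed_under_hom :
    (∃ (A : PRAC Sig3) (p1 p2 : ℝ),
      A.Recognizes {w : List Sig3 | ∃ (u : List Sig3) (k : ℕ), 1 ≤ k ∧
        w = u ++ List.replicate k Sig3.c ∧ Sig3.c ∉ u} p1 p2) ∧
    ((fun w : List Sig3 => w.map hmap) ''
        {w : List Sig3 | ∃ (u : List Sig3) (k : ℕ), 1 ≤ k ∧
          w = u ++ List.replicate k Sig3.c ∧ Sig3.c ∉ u} =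
      {w : List Bool | w.getLast? = some true}) ∧
    (¬ ∃ (A : PRAC Bool) (p1 p2 : ℝ),
      A.Recognizes {w : List Bool | w.getLast? = some true} p1 p2) := by
  exact ⟨⟨A3, 5/12, 1/2, part1⟩, part2, part3⟩
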